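/- arXiv:2503.05046 — 2 statements merged into one kernel-verified Lean document; each statement's English description precedes it below -/
import Mathlib

section
/- Let f : ℝⁿ → ℝ be μ-strongly convex with L-Lipschitz gradient on the sublevel set S(v₀) = {v : f(v) ≤ f(v₀)}. Consider quasi-Newton iterations v_{m+1} = v_m + α_m Δv_m with Δv_m = -H(v_m)⁻¹∇f(v_m), exact line search α_m = argmin_{α>0} f(v_m + αΔv_m), where each H(v_m) is symmetric positive definite with condition number at most σ. Then for all m ≥ 0, f(v_m) - f(v*) ≤ (1 - μ/(σ²L))ᵐ (f(v₀) - f(v*)), where v* is the unique minimizer of f. -/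
/-!
The step `-⟪∇f x, d⟫ / (L ‖d‖²)` minimizes the quadratic upper bound that the Lipschitz gradient
gives along `d`, so exact line search decreases `f` by at least `⟪∇f x, d⟫² / (2 L ‖d‖²)`.
For the quasi-Newton direction `d = -H⁻¹ ∇f x`, the eigenvalue bounds of `H` give the angle
condition `‖∇f x‖² ‖d‖² ≤ σ ⟪∇f x, d⟫²`, so the decrease is at least `‖∇f x‖² / (2 σ L)`, and by
the Polyak–Łojasiewicz inequality `‖∇f x‖² ≥ 2 μ (f x - f v*)` this is at least `μ / (σ L)` times
the optimality gap. As `σ ≥ 1`, the contraction factor `1 - μ / (σ L)` is at most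
`1 - μ / (σ² L)`.
-/

open Matrix Set Filter Topology
open scoped RealInnerProductSpace NNReal

namespace Matrix

variable {ι : Type*} [Fintype ι] [DecidableEq ι] {A : Matrix ι ι ℝ}

noncomputable def IsHermitian.condNumber (hA : A.IsHermitian) : ℝ :=
  (⨆ i, hA.eigenvalues i) / ⨅ i, hA.eigenvalues i

namespace IsHermitian

lemma inner_eigenvectorBasis_toEuclideanLin (hA : A.IsHermitian) (j : ι)
    (u : EuclideanSpace ℝ ι) :
    ⟪hA.eigenvectorBasis j, A.toEuclideanLin u⟫ =
      hA.eigenvalues j * ⟪hA.eigenvectorBasis j, u⟫ := by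
  have hTB : A.toEuclideanLin (hA.eigenvectorBasis j) =
      hA.eigenvalues j • hA.eigenvectorBasis j := by
    ext1
    simp [toLpLin_apply, hA.mulVec_eigenvectorBasis]
  rw [← isSymmetric_toEuclideanLin_iff.mpr hA, hTB, real_inner_smul_left]

lemma mul_norm_sq_le_inner_toEuclideanLin (hA : A.IsHermitian) {a : ℝ}
    (ha : ∀ i, a ≤ hA.eigenvalues i) (u : EuclideanSpace ℝ ι) :
    a * ‖u‖ ^ 2 ≤ ⟪u, A.toEuclideanLin u⟫ := by
  rw [← real_inner_self_eq_norm_sq, ← hA.eigenvectorBasis.sum_inner_mul_inner,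
    ← hA.eigenvectorBasis.sum_inner_mul_inner, Finset.mul_sum]
  refine Finset.sum_le_sum fun j _ => ?_
  rw [real_inner_comm (hA.eigenvectorBasis j) u, inner_eigenvectorBasis_toEuclideanLin]
  nlinarith [ha j, sq_nonneg ⟪hA.eigenvectorBasis j, u⟫]

lemma norm_toEuclideanLin_sq_le (hA : A.IsHermitian) {b : ℝ}
    (h0 : ∀ i, 0 ≤ hA.eigenvalues i) (hb : ∀ i, hA.eigenvalues i ≤ b) (u : EuclideanSpace ℝ ι) :
    ‖A.toEuclideanLin u‖ ^ 2 ≤ b * ⟪u, A.toEuclideanLin u⟫ := by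
  rw [← real_inner_self_eq_norm_sq, ← hA.eigenvectorBasis.sum_inner_mul_inner,
    ← hA.eigenvectorBasis.sum_inner_mul_inner, Finset.mul_sum]
  refine Finset.sum_le_sum fun j _ => ?_
  rw [real_inner_comm (hA.eigenvectorBasis j), real_inner_comm (hA.eigenvectorBasis j),
    inner_eigenvectorBasis_toEuclideanLin]
  nlinarith [mul_le_mul_of_nonneg_left (hb j) (h0 j), sq_nonneg ⟪hA.eigenvectorBasis j, u⟫]

end IsHermitian

namespace PosDef

variable [Nonempty ι]

lemma iInf_eigenvalues_pos (hA : A.PosDef) : 0 < ⨅ i, hA.1.eigenvalues i := by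
  obtain ⟨i, hi⟩ := exists_eq_ciInf_of_finite (f := hA.1.eigenvalues)
  exact hi ▸ hA.eigenvalues_pos i

lemma one_le_condNumber (hA : A.PosDef) : 1 ≤ hA.1.condNumber := by
  have i := Classical.arbitrary ι
  rw [IsHermitian.condNumber, one_le_div hA.iInf_eigenvalues_pos]
  exact (ciInf_le (finite_range _).bddBelow i).trans (le_ciSup (finite_range _).bddAbove i)

lemma norm_sq_mul_norm_toEuclideanLin_sq_le (hA : A.PosDef) (u : EuclideanSpace ℝ ι) :
    ‖u‖ ^ 2 * ‖A.toEuclideanLin u‖ ^ 2 ≤ hA.1.condNumber * ⟪u, A.toEuclideanLin u⟫ ^ 2 := by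
  set a := ⨅ i, hA.1.eigenvalues i
  set b := ⨆ i, hA.1.eigenvalues i
  have ha : 0 < a := hA.iInf_eigenvalues_pos
  have hlow := hA.1.mul_norm_sq_le_inner_toEuclideanLin
    (fun i => ciInf_le (finite_range _).bddBelow i) u
  have hup := hA.1.norm_toEuclideanLin_sq_le (fun i => (hA.eigenvalues_pos i).le)
    (fun i => le_ciSup (finite_range _).bddAbove i) u
  rw [IsHermitian.condNumber, div_mul_eq_mul_div, le_div_iff₀ ha]
  nlinarith [mul_le_mul hlow hup (sq_nonneg _) (by nlinarith [sq_nonneg ‖u‖])]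

lemma inner_toEuclideanLin_pos (hA : A.PosDef) {u : EuclideanSpace ℝ ι} (hu : u ≠ 0) :
    0 < ⟪u, A.toEuclideanLin u⟫ := by
  have hlow := hA.1.mul_norm_sq_le_inner_toEuclideanLin
    (fun i => ciInf_le (finite_range _).bddBelow i) u
  have := hA.iInf_eigenvalues_pos
  have := norm_pos_iff.mpr hu
  exact lt_of_lt_of_le (by positivity) hlow

end PosDef

lemma toEuclideanLin_toLp_inv_mulVec (hA : IsUnit A.det) (g : EuclideanSpace ℝ ι) :
    A.toEuclideanLin (WithLp.toLp 2 (A⁻¹ *ᵥ g.ofLp)) = g := by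
  simp [toLpLin_apply, mulVec_mulVec, mul_nonsing_inv A hA]

end Matrix

lemma ConvexOn.add_le_of_hasFDerivAt {F : Type*} [NormedAddCommGroup F] [NormedSpace ℝ F]
    {h : F → ℝ} {h' : F →L[ℝ] ℝ} {x : F} (hh : ConvexOn ℝ univ h) (hx : HasFDerivAt h h' x)
    (y : F) : h x + h' (y - x) ≤ h y := by
  have hline : ConvexOn ℝ univ (h ∘ (AffineMap.lineMap x y : ℝ →ᵃ[ℝ] F)) := by
    simpa using hh.comp_affineMap (AffineMap.lineMap x y)
  have hderiv : HasDerivAt (h ∘ (AffineMap.lineMap x y : ℝ →ᵃ[ℝ] F)) (h' (y - x)) 0 :=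
    (AffineMap.lineMap_apply_zero (k := ℝ) x y ▸ hx).comp_hasDerivAt (0 : ℝ)
      AffineMap.hasDerivAt_lineMap
  have := hline.le_slope_of_hasDerivAt (mem_univ 0) (mem_univ 1) one_pos hderiv
  simp only [slope_def_field, Function.comp_apply, AffineMap.lineMap_apply_zero,
    AffineMap.lineMap_apply_one, sub_zero, div_one] at this
  linarith

section InnerProductSpace

variable {E : Type*} [NormedAddCommGroup E] [InnerProductSpace ℝ E] [CompleteSpace E]
  {f : E → ℝ} {x d g : E} {m : ℝ}

lemma StrongConvexOn.add_inner_add_le_of_hasGradientAt (hf : StrongConvexOn univ m f)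
    (hg : HasGradientAt f g x) (y : E) : f x + ⟪g, y - x⟫ + m / 2 * ‖y - x‖ ^ 2 ≤ f y := by
  have hq : HasFDerivAt (fun z : E => m / 2 * ‖z‖ ^ 2) ((m / 2) • (2 • innerSL ℝ x)) x :=
    (hasStrictFDerivAt_norm_sq x).hasFDerivAt.const_smul (m / 2)
  have h := (strongConvexOn_iff_convex.mp hf).add_le_of_hasFDerivAt (hg.hasFDerivAt.sub hq) y
  simp only [_root_.sub_apply, InnerProductSpace.toDual_apply_apply, _root_.smul_apply,
    coe_innerSL_apply, smul_eq_mul, nsmul_eq_mul, Nat.cast_ofNat, inner_sub_right,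
    real_inner_self_eq_norm_sq] at h
  rw [norm_sub_sq_real, inner_sub_right, real_inner_comm x y]
  linarith

lemma StrongConvexOn.two_mul_sub_le_norm_sq_of_hasGradientAt (hf : StrongConvexOn univ m f)
    (hm : 0 ≤ m) (hg : HasGradientAt f g x) (y : E) : 2 * m * (f x - f y) ≤ ‖g‖ ^ 2 := by
  have h := hf.add_inner_add_le_of_hasGradientAt hg y
  have hcs := mul_le_mul_of_nonneg_left
    (neg_le_of_abs_le (abs_real_inner_le_norm g (y - x))) hm
  nlinarith [sq_nonneg (‖g‖ - m * ‖y - x‖)]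

lemma hasDerivAt_apply_add_smul {t : ℝ} (hf : DifferentiableAt ℝ f (x + t • d)) :
    HasDerivAt (fun s : ℝ => f (x + s • d)) ⟪gradient f (x + t • d), d⟫ t := by
  have hline : HasDerivAt (fun s : ℝ => x + s • d) d t := by
    simpa using ((hasDerivAt_id t).smul_const d).const_add x
  have := hf.hasGradientAt.hasFDerivAt.comp_hasDerivAt t hline
  rwa [InnerProductSpace.toDual_apply_apply] at this

lemma HasDerivAt.eventually_nhdsGT_lt_of_neg {φ : ℝ → ℝ} {φ' a : ℝ} (h : HasDerivAt φ φ' a)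
    (hneg : φ' < 0) : ∀ᶠ t in 𝓝[>] a, φ t < φ a := by
  filter_upwards [(hasDerivAt_iff_tendsto_slope_left_right.mp h).2.eventually_lt_const hneg,
    self_mem_nhdsWithin] with t hslope (ht : a < t)
  have := sub_smul_slope φ a t
  rw [smul_eq_mul, vsub_eq_sub] at this
  linarith [mul_neg_of_pos_of_neg (sub_pos.mpr ht) hslope]

lemma apply_add_le_of_lipschitzOnWith_gradient {K : ℝ≥0} {S : Set E}
    (hf : Differentiable ℝ f) (hLip : LipschitzOnWith K (gradient f) S)
    (hS : ∀ s ∈ Icc (0 : ℝ) 1, x + s • d ∈ S) :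
    f (x + d) ≤ f x + ⟪gradient f x, d⟫ + K / 2 * ‖d‖ ^ 2 := by
  have hbound : ∀ s ∈ Ico (0 : ℝ) 1,
      ⟪gradient f (x + s • d), d⟫ ≤ ⟪gradient f x, d⟫ + K * s * ‖d‖ ^ 2 := fun s hs => by
    have hlip := hLip.norm_sub_le (hS s (Ico_subset_Icc_self hs)) (by simpa using hS 0 (by simp))
    rw [add_sub_cancel_left, norm_smul, Real.norm_of_nonneg hs.1] at hlip
    have hcs := real_inner_le_norm (gradient f (x + s • d) - gradient f x) d
    rw [inner_sub_left] at hcs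
    nlinarith [mul_le_mul_of_nonneg_right hlip (norm_nonneg d)]
  have hB : ∀ s : ℝ, HasDerivAt (fun s => f x + s * ⟪gradient f x, d⟫ + K / 2 * s ^ 2 * ‖d‖ ^ 2)
      (⟪gradient f x, d⟫ + K * s * ‖d‖ ^ 2) s := fun s => by
    refine ((((hasDerivAt_id s).mul_const ⟪gradient f x, d⟫).const_add (f x)).add
      (((hasDerivAt_pow 2 s).const_mul (K / 2 : ℝ)).mul_const (‖d‖ ^ 2))).congr_deriv ?_
    simp only [Nat.cast_ofNat]
    ring
  have := image_le_of_deriv_right_le_deriv_boundary (a := 0) (b := 1)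
    (f := fun s : ℝ => f (x + s • d))
    (B := fun s => f x + s * ⟪gradient f x, d⟫ + K / 2 * s ^ 2 * ‖d‖ ^ 2)
    (fun s _ => (hasDerivAt_apply_add_smul (hf _)).continuousAt.continuousWithinAt)
    (fun s _ => (hasDerivAt_apply_add_smul (hf _)).hasDerivWithinAt) (by simp)
    (fun s _ => (hB s).continuousAt.continuousWithinAt) (fun s _ => (hB s).hasDerivWithinAt)
    hbound (right_mem_Icc.mpr zero_le_one)
  simpa using this

lemma apply_add_smul_le_of_lipschitzOnWith_gradient {K : ℝ≥0} {S : Set E}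
    (hf : Differentiable ℝ f) (hK : 0 < K) (hLip : LipschitzOnWith K (gradient f) S)
    (hS : {y | f y ≤ f x} ⊆ S) (hd : ⟪gradient f x, d⟫ < 0) :
    f (x + (-⟪gradient f x, d⟫ / (K * ‖d‖ ^ 2)) • d) ≤
      f x - ⟪gradient f x, d⟫ ^ 2 / (2 * K * ‖d‖ ^ 2) := by
  set c := -⟪gradient f x, d⟫ with hc
  have hcpos : 0 < c := neg_pos.mpr hd
  have hD : 0 < ‖d‖ ^ 2 := by
    have : d ≠ 0 := by rintro rfl; simp at hd
    positivity
  have hK' : (0 : ℝ) < K := hK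
  have quad : ∀ t, 0 ≤ t → (∀ s ∈ Icc 0 t, f (x + s • d) ≤ f x) →
      f (x + t • d) ≤ f x - c * t + K / 2 * t ^ 2 * ‖d‖ ^ 2 := fun t ht hsub => by
    have := apply_add_le_of_lipschitzOnWith_gradient (d := t • d) hf hLip fun s hs => hS <| by
      rw [smul_smul]
      exact hsub (s * t) ⟨mul_nonneg hs.1 ht, mul_le_of_le_one_left ht hs.2⟩
    rw [inner_smul_right, norm_smul, mul_pow, Real.norm_eq_abs, sq_abs] at this
    linarith
  have hcont : Continuous fun s : ℝ => f (x + s • d) := hf.continuous.comp (by fun_prop)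
  set T := c / (K * ‖d‖ ^ 2) with hTdef
  have hT : 0 < T := by positivity
  -- The Lipschitz bound is only available on `S`; a continuous induction keeps the segment
  -- `[x, x + T • d]` inside the sublevel set.
  have hseg : Icc 0 T ⊆ {s | f (x + s • d) ≤ f x} := by
    refine IsClosed.Icc_subset_of_forall_mem_nhdsGT_of_Icc_subset
      ((isClosed_le hcont continuous_const).inter isClosed_Icc) (by simp) fun t ht hsub => ?_
    rcases ht.1.eq_or_lt with rfl | htpos
    · have hderiv := hasDerivAt_apply_add_smul (x := x) (d := d) (hf (x + (0 : ℝ) • d))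
      rw [zero_smul, add_zero] at hderiv
      filter_upwards [hderiv.eventually_nhdsGT_lt_of_neg hd] with s hs
      simpa using hs.le
    · have hlt : f (x + t • d) < f x := by
        have htT : K * ‖d‖ ^ 2 * t < c := (lt_div_iff₀' (by positivity)).mp ht.2
        nlinarith [quad t ht.1 hsub, htpos]
      exact mem_nhdsWithin_of_mem_nhds <|
        (hcont.continuousAt.eventually_lt continuousAt_const hlt).mono fun s hs => hs.le
  calc f (x + T • d) ≤ f x - c * T + K / 2 * T ^ 2 * ‖d‖ ^ 2 := quad T hT.le hseg
    _ = f x - c ^ 2 / (2 * K * ‖d‖ ^ 2) := by rw [hTdef]; field_simp; ring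
    _ = _ := by rw [hc, neg_sq]

lemma StrongConvexOn.apply_add_smul_sub_le_of_isMinOn {K : ℝ≥0} {S : Set E} {μ σ α : ℝ}
    (hsc : StrongConvexOn univ μ f) (hμ : 0 ≤ μ) (hf : Differentiable ℝ f) (hK : 0 < K)
    (hLip : LipschitzOnWith K (gradient f) S) (hS : {y | f y ≤ f x} ⊆ S)
    (hd : ⟪gradient f x, d⟫ < 0)
    (hangle : ‖gradient f x‖ ^ 2 * ‖d‖ ^ 2 ≤ σ * ⟪gradient f x, d⟫ ^ 2)
    (hα : IsMinOn (fun a : ℝ => f (x + a • d)) (Ioi 0) α) (y : E) :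
    f (x + α • d) - f y ≤ (1 - μ / (σ * K)) * (f x - f y) := by
  have hd0 : d ≠ 0 := by rintro rfl; simp at hd
  have hg0 : gradient f x ≠ 0 := by intro h; simp [h] at hd
  have hD : 0 < ‖d‖ ^ 2 := by positivity
  have hG : 0 < ‖gradient f x‖ ^ 2 := by positivity
  have hK' : (0 : ℝ) < K := hK
  have hσ : 0 < σ := by nlinarith [mul_pos hG hD, sq_nonneg ⟪gradient f x, d⟫]
  have hdecr : f (x + α • d) ≤ f x - ⟪gradient f x, d⟫ ^ 2 / (2 * K * ‖d‖ ^ 2) :=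
    (isMinOn_iff.mp hα _ (mem_Ioi.mpr (div_pos (neg_pos.mpr hd) (by positivity)))).trans
      (apply_add_smul_le_of_lipschitzOnWith_gradient hf hK hLip hS hd)
  have hPL := hsc.two_mul_sub_le_norm_sq_of_hasGradientAt hμ (hf x).hasGradientAt y
  have hgain : μ / (σ * K) * (f x - f y) ≤ ⟪gradient f x, d⟫ ^ 2 / (2 * K * ‖d‖ ^ 2) :=
    calc μ / (σ * K) * (f x - f y) = 2 * μ * (f x - f y) / (2 * σ * K) := by
          field_simp
      _ ≤ ‖gradient f x‖ ^ 2 / (2 * σ * K) := by gcongr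
      _ ≤ ⟪gradient f x, d⟫ ^ 2 / (2 * K * ‖d‖ ^ 2) := by
          rw [div_le_div_iff₀ (by positivity) (by positivity)]
          nlinarith [mul_le_mul_of_nonneg_left hangle (by positivity : (0 : ℝ) ≤ 2 * K)]
  linarith

end InnerProductSpace

lemma StrongConvexOn.quasiNewton_step_sub_le {ι : Type*} [Fintype ι] [DecidableEq ι]
    [Nonempty ι] {f : EuclideanSpace ℝ ι → ℝ} {x d : EuclideanSpace ℝ ι} {A : Matrix ι ι ℝ}
    {K : ℝ≥0} {S : Set (EuclideanSpace ℝ ι)} {μ σ α : ℝ}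
    (hsc : StrongConvexOn univ μ f) (hμ : 0 ≤ μ) (hf : Differentiable ℝ f) (hK : 0 < K)
    (hLip : LipschitzOnWith K (gradient f) S) (hS : {y | f y ≤ f x} ⊆ S)
    (hA : A.PosDef) (hσ : hA.1.condNumber ≤ σ)
    (hd : d = -(WithLp.equiv 2 (ι → ℝ)).symm (A⁻¹ *ᵥ WithLp.equiv 2 (ι → ℝ) (gradient f x)))
    (hα : IsMinOn (fun a : ℝ => f (x + a • d)) (Ioi 0) α) (y : EuclideanSpace ℝ ι) :
    f (x + α • d) - f y ≤ (1 - μ / (σ * K)) * (f x - f y) := by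
  set u := WithLp.toLp 2 (A⁻¹ *ᵥ (gradient f x).ofLp) with hu
  have hdu : d = -u := hd
  have hAu : A.toEuclideanLin u = gradient f x :=
    toEuclideanLin_toLp_inv_mulVec ((isUnit_iff_isUnit_det A).mp hA.isUnit) _
  rcases eq_or_ne (gradient f x) 0 with hg | hg
  · have hxy : f x ≤ f y := by
      have := hsc.add_inner_add_le_of_hasGradientAt (hg ▸ (hf x).hasGradientAt) y
      rw [inner_zero_left, add_zero] at this
      nlinarith [sq_nonneg ‖y - x‖]
    have hgain : 0 ≤ μ / (σ * K) := by
      have := hA.one_le_condNumber.trans hσ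
      positivity
    rw [hdu, hu, hg]
    simp only [WithLp.ofLp_zero, mulVec_zero, WithLp.toLp_zero, neg_zero, smul_zero, add_zero]
    nlinarith [mul_nonpos_of_nonneg_of_nonpos hgain (sub_nonpos.mpr hxy)]
  · have hu0 : u ≠ 0 := by rintro h; rw [h, map_zero] at hAu; exact hg hAu.symm
    have hinner : ⟪gradient f x, d⟫ = -⟪u, A.toEuclideanLin u⟫ := by
      rw [hdu, inner_neg_right, ← hAu, real_inner_comm]
    refine hsc.apply_add_smul_sub_le_of_isMinOn hμ hf hK hLip hS ?_ ?_ hα y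
    · rw [hinner, neg_lt_zero]
      exact hA.inner_toEuclideanLin_pos hu0
    · rw [hinner, neg_sq, hdu, norm_neg, ← hAu, mul_comm]
      exact (hA.norm_sq_mul_norm_toEuclideanLin_sq_le u).trans
        (mul_le_mul_of_nonneg_right hσ (sq_nonneg _))

/-- Linear convergence of quasi-Newton iterations with exact line search:
if `f` is `μ`-strongly convex with `L`-Lipschitz gradient on the sublevel set of `v₀`,
and the SPD Hessian approximations have condition number at most `σ` there, then
`f(v_m) - f(v*) ≤ (1 - μ/(σ²L))^m (f(v₀) - f(v*))`. -/
theorem quasi_newton_linear_convergence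
    (n : ℕ) [NeZero n]
    (f : EuclideanSpace ℝ (Fin n) → ℝ) (μ L σ : ℝ)
    (hμ : 0 < μ) (hμL : μ ≤ L)
    (hsc : ConvexOn ℝ Set.univ (fun x => f x - μ / 2 * ‖x‖ ^ 2))
    (hf : Differentiable ℝ f)
    (v0 : EuclideanSpace ℝ (Fin n))
    (hLip : LipschitzOnWith (Real.toNNReal L) (gradient f) {v | f v ≤ f v0})
    (H : EuclideanSpace ℝ (Fin n) → Matrix (Fin n) (Fin n) ℝ)
    (hH : ∀ v ∈ {v | f v ≤ f v0}, H v |>.PosDef)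
    (hcond : ∀ v (hv : v ∈ {v | f v ≤ f v0}),
      (⨆ i, (hH v hv).1.eigenvalues i) / (⨅ i, (hH v hv).1.eigenvalues i) ≤ σ)
    (v : ℕ → EuclideanSpace ℝ (Fin n)) (hv0 : v 0 = v0)
    (d : ℕ → EuclideanSpace ℝ (Fin n))
    (hd : ∀ m, d m = -(WithLp.equiv 2 (Fin n → ℝ)).symm
        ((H (v m))⁻¹.mulVec (WithLp.equiv 2 (Fin n → ℝ) (gradient f (v m)))))
    (α : ℕ → ℝ)
    (hα : ∀ m, IsMinOn (fun a : ℝ => f (v m + a • d m)) (Set.Ioi 0) (α m) ∧ 0 < α m)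
    (hstep : ∀ m, v (m + 1) = v m + α m • d m)
    (vstar : EuclideanSpace ℝ (Fin n)) (hmin : ∀ w, f vstar ≤ f w) :
    ∀ m, f (v m) - f vstar ≤ (1 - μ / (σ ^ 2 * L)) ^ m * (f v0 - f vstar) := by
  have hL : 0 < L := hμ.trans_le hμL
  have hσ : 1 ≤ σ :=
    (hH v0 (le_refl (f v0))).one_le_condNumber.trans (hcond v0 (le_refl (f v0)))
  have step : ∀ m, f (v m) ≤ f v0 → ∀ y,
      f (v (m + 1)) - f y ≤ (1 - μ / (σ * L)) * (f (v m) - f y) := fun m hm y => by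
    have := (strongConvexOn_iff_convex.mpr hsc).quasiNewton_step_sub_le hμ.le hf
      (Real.toNNReal_pos.mpr hL) hLip (fun w hw => le_trans hw hm) (hH _ hm) (hcond _ hm)
      (hd m) (hα m).1 y
    rwa [Real.coe_toNNReal L hL.le, ← hstep] at this
  have hsub : ∀ m, f (v m) ≤ f v0 := by
    intro m
    induction m with
    | zero => rw [hv0]
    | succ m ih => linarith [step m ih (v m)]
  have hrate : 0 ≤ 1 - μ / (σ ^ 2 * L) := by
    rw [sub_nonneg, div_le_one (by positivity)]
    exact hμL.trans (le_mul_of_one_le_left hL.le (one_le_pow₀ hσ))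
  have hweaken : 1 - μ / (σ * L) ≤ 1 - μ / (σ ^ 2 * L) := by
    gcongr
    nlinarith
  intro m
  simpa only [hv0] using le_geom (u := fun k => f (v k) - f vstar) hrate m fun k _ =>
    (step k (hsub k) vstar).trans
      (mul_le_mul_of_nonneg_right hweaken (sub_nonneg.mpr (hmin _)))
end

section
/- Let f : ℝⁿ → ℝ be μ-strongly convex and differentiable, let H be SPD with condition number at most σ, and suppose ∇f is L-Lipschitz on the segment from v to the exact line search point. Then one quasi-Newton step with exact line search from v satisfies f(v⁺) - f(v*) ≤ (1 - μ/(σ²L)) (f(v) - f(v*)). -/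
/-!
With `y = H⁻¹ ∇f(v)`, the Rayleigh bounds for `H` give `⟪∇f(v), y⟫ = ⟪H y, y⟫ ≥ λ_min ‖y‖²` and
`‖∇f(v)‖ = ‖H y‖ ≤ λ_max ‖y‖`, so the direction `Δv = -y` makes an angle with `-∇f(v)` whose
cosine is at least `1/σ`. The directional derivative vanishes at `α*` and grows by at most
`L α ‖Δv‖²` along the segment, so `α*` is at least `t₀ = -⟪∇f(v), Δv⟫ / (L ‖Δv‖²)`, and the
descent lemma at `t₀` gives the decrease `⟪∇f(v), Δv⟫² / (2 L ‖Δv‖²)`. Together with the angle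
bound and the Polyak–Łojasiewicz inequality `2 μ (f(v) - f(v*)) ≤ ‖∇f(v)‖²` this is the
contraction.
-/

open Matrix RealInnerProductSpace Set
open scoped NNReal

section Spectral

variable {ι E : Type*} [Fintype ι] [NormedAddCommGroup E] [InnerProductSpace ℝ E]
  {T : E →ₗ[ℝ] E} (e : OrthonormalBasis ι ℝ E) {eig : ι → ℝ}

namespace LinearMap.IsSymmetric

theorem inner_basis_apply (hT : T.IsSymmetric) (he : ∀ i, T (e i) = eig i • e i) (i : ι)
    (x : E) : ⟪e i, T x⟫ = eig i * ⟪e i, x⟫ := by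
  rw [← hT, he, real_inner_smul_left]

theorem mul_norm_sq_le_inner_apply_self (hT : T.IsSymmetric) (he : ∀ i, T (e i) = eig i • e i)
    {a : ℝ} (ha : ∀ i, a ≤ eig i) (x : E) : a * ‖x‖ ^ 2 ≤ ⟪T x, x⟫ := by
  rw [← e.sum_sq_inner_right, ← e.sum_inner_mul_inner, Finset.mul_sum]
  refine Finset.sum_le_sum fun i _ => ?_
  rw [real_inner_comm (e i) (T x), hT.inner_basis_apply e he, mul_assoc, ← sq]
  exact mul_le_mul_of_nonneg_right (ha i) (sq_nonneg _)

theorem norm_apply_sq_le (hT : T.IsSymmetric) (he : ∀ i, T (e i) = eig i • e i)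
    {b : ℝ} (hb : ∀ i, |eig i| ≤ b) (x : E) : ‖T x‖ ^ 2 ≤ b ^ 2 * ‖x‖ ^ 2 := by
  rw [← e.sum_sq_inner_right, ← e.sum_sq_inner_right, Finset.mul_sum]
  refine Finset.sum_le_sum fun i _ => ?_
  rw [hT.inner_basis_apply e he, mul_pow]
  exact mul_le_mul_of_nonneg_right (sq_le_sq' (abs_le.1 (hb i)).1 (abs_le.1 (hb i)).2)
    (sq_nonneg _)

end LinearMap.IsSymmetric

end Spectral

namespace Matrix

variable {n : Type*} [Fintype n] [DecidableEq n] {A : Matrix n n ℝ}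

theorem IsHermitian.toEuclideanLin_eigenvectorBasis (hA : A.IsHermitian) (j : n) :
    toEuclideanLin A (hA.eigenvectorBasis j) = hA.eigenvalues j • hA.eigenvectorBasis j := by
  simpa [toLpLin_apply] using congrArg (WithLp.toLp 2) (hA.mulVec_eigenvectorBasis j)

theorem PosDef.iInf_eigenvalues_pos_s17 [Nonempty n] (hA : A.PosDef) :
    0 < ⨅ i, hA.1.eigenvalues i := by
  obtain ⟨i, hi⟩ := exists_eq_ciInf_of_finite (f := hA.1.eigenvalues)
  exact hi ▸ hA.eigenvalues_pos i

theorem PosDef.inner_toEuclideanLin_pos_s17 (hA : A.PosDef) {x : EuclideanSpace ℝ n} (hx : x ≠ 0) :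
    0 < ⟪x, toEuclideanLin A x⟫ := by
  have := hA.dotProduct_mulVec_pos (x := WithLp.ofLp x) (by simpa using hx)
  simpa [EuclideanSpace.inner_eq_star_dotProduct, toLpLin_apply, dotProduct_comm] using this

theorem PosDef.toEuclideanLin_toEuclideanLin_inv (hA : A.PosDef) (x : EuclideanSpace ℝ n) :
    toEuclideanLin A (toEuclideanLin A⁻¹ x) = x := by
  simp [toLpLin_apply, mulVec_mulVec, mul_nonsing_inv _ ((isUnit_iff_isUnit_det A).1 hA.isUnit)]

theorem PosDef.norm_mul_norm_toEuclideanLin_inv_le [Nonempty n] (hA : A.PosDef)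
    (g : EuclideanSpace ℝ n) :
    ‖g‖ * ‖toEuclideanLin A⁻¹ g‖ ≤
      (⨆ i, hA.1.eigenvalues i) / (⨅ i, hA.1.eigenvalues i) * ⟪g, toEuclideanLin A⁻¹ g⟫ := by
  set y := toEuclideanLin A⁻¹ g
  set lmin := ⨅ i, hA.1.eigenvalues i
  set lmax := ⨆ i, hA.1.eigenvalues i
  have hT : (toEuclideanLin A).IsSymmetric := isSymmetric_toEuclideanLin_iff.2 hA.1
  have hAy : toEuclideanLin A y = g := hA.toEuclideanLin_toEuclideanLin_inv g
  have hle_max (i : n) : hA.1.eigenvalues i ≤ lmax := le_ciSup (finite_range _).bddAbove i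
  have hmin : 0 < lmin := hA.iInf_eigenvalues_pos_s17
  have hmax : 0 ≤ lmax := (hA.eigenvalues_pos (Classical.arbitrary n)).le.trans (hle_max _)
  have hlo : lmin * ‖y‖ ^ 2 ≤ ⟪g, y⟫ := by
    simpa only [hAy] using hT.mul_norm_sq_le_inner_apply_self hA.1.eigenvectorBasis
      hA.1.toEuclideanLin_eigenvectorBasis (fun i => ciInf_le (finite_range _).bddBelow i) y
  have hhi : ‖g‖ ≤ lmax * ‖y‖ := by
    have := hT.norm_apply_sq_le hA.1.eigenvectorBasis hA.1.toEuclideanLin_eigenvectorBasis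
      (fun i => (abs_of_pos (hA.eigenvalues_pos i)).trans_le (hle_max i)) y
    rw [hAy, ← mul_pow] at this
    exact (pow_le_pow_iff_left₀ (norm_nonneg _) (by positivity) two_ne_zero).1 this
  calc ‖g‖ * ‖y‖ ≤ lmax * ‖y‖ ^ 2 := by nlinarith [norm_nonneg y]
    _ = lmax / lmin * (lmin * ‖y‖ ^ 2) := by field_simp
    _ ≤ lmax / lmin * ⟪g, y⟫ := by gcongr

end Matrix

section LineRestriction

variable {F : Type*} [NormedAddCommGroup F] [NormedSpace ℝ F] {x d : F}

theorem add_smul_mem_segment {t α : ℝ} (ht : t ∈ Icc 0 α) (hα : 0 < α) :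
    x + t • d ∈ segment ℝ x (x + α • d) := by
  rw [segment_eq_image']
  refine ⟨t / α, ⟨div_nonneg ht.1 hα.le, (div_le_one hα).2 ht.2⟩, ?_⟩
  simp only [add_sub_cancel_left, smul_smul, div_mul_cancel₀ _ hα.ne']

variable {f : F → ℝ} {f' : F →L[ℝ] ℝ}

theorem HasFDerivAt.hasDerivAt_add_smul {t : ℝ} (hf : HasFDerivAt f f' (x + t • d)) :
    HasDerivAt (fun s : ℝ => f (x + s • d)) (f' d) t := by
  have hline : HasDerivAt (fun s : ℝ => x + s • d) d t := by
    simpa using ((hasDerivAt_id t).smul_const d).const_add x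
  exact hf.comp_hasDerivAt t hline

theorem ConvexOn.add_le_of_hasFDerivAt_s17 (hc : ConvexOn ℝ univ f) (hf : HasFDerivAt f f' x)
    (y : F) : f x + f' (y - x) ≤ f y := by
  have hline : ConvexOn ℝ univ fun t : ℝ => f (x + t • (y - x)) := by
    simpa [Function.comp_def, AffineMap.lineMap_apply_module', add_comm] using
      hc.comp_affineMap (AffineMap.lineMap x y)
  have := hline.le_slope_of_hasDerivAt (mem_univ 0) (mem_univ 1) one_pos
    (HasFDerivAt.hasDerivAt_add_smul (by simpa using hf))
  rw [slope_def_field, one_smul, add_sub_cancel, zero_smul, add_zero, sub_zero, div_one] at this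
  linarith

end LineRestriction

theorem LipschitzOnWith.inner_sub_le {E : Type*} [NormedAddCommGroup E] [InnerProductSpace ℝ E]
    {s : Set E} {g : E → E} {L : ℝ≥0} (hg : LipschitzOnWith L g s) {x y : E} (hx : x ∈ s)
    (hy : y ∈ s) (w : E) : ⟪g y - g x, w⟫ ≤ L * ‖y - x‖ * ‖w‖ := by
  calc ⟪g y - g x, w⟫ ≤ ‖g y - g x‖ * ‖w‖ := real_inner_le_norm _ _
    _ ≤ L * ‖y - x‖ * ‖w‖ := by
      gcongr
      simpa only [dist_eq_norm] using hg.dist_le_mul y hy x hx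

section Gradient

variable {E : Type*} [NormedAddCommGroup E] [InnerProductSpace ℝ E] [CompleteSpace E]
  {f : E → ℝ} {x d : E}

theorem HasGradientAt.hasDerivAt_add_smul {g : E} {t : ℝ} (hf : HasGradientAt f g (x + t • d)) :
    HasDerivAt (fun s : ℝ => f (x + s • d)) ⟪g, d⟫ t := by
  simpa using hf.hasFDerivAt.hasDerivAt_add_smul

theorem StrongConvexOn.add_inner_gradient_add_le {μ : ℝ} (hf : StrongConvexOn univ μ f)
    (hd : DifferentiableAt ℝ f x) (y : E) :
    f x + ⟪gradient f x, y - x⟫ + μ / 2 * ‖y - x‖ ^ 2 ≤ f y := by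
  have := (strongConvexOn_iff_convex.1 hf).add_le_of_hasFDerivAt_s17
    (hd.hasGradientAt.hasFDerivAt.sub ((hasFDerivAt_id x).norm_sq.const_mul (μ / 2))) y
  simp only [_root_.sub_apply, _root_.smul_apply, smul_eq_mul,
    InnerProductSpace.toDual_apply_apply, ContinuousLinearMap.comp_apply, innerSL_apply_apply,
    ContinuousLinearMap.id_apply, id_eq, nsmul_eq_mul, Nat.cast_ofNat, inner_sub_right,
    real_inner_self_eq_norm_sq] at this
  rw [norm_sub_sq_real, inner_sub_right, real_inner_comm x y]
  linarith

theorem StrongConvexOn.sub_le_norm_gradient_sq {μ : ℝ} (hμ : 0 ≤ μ)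
    (hf : StrongConvexOn univ μ f) (hd : DifferentiableAt ℝ f x) (y : E) :
    2 * μ * (f x - f y) ≤ ‖gradient f x‖ ^ 2 := by
  have h := hf.add_inner_gradient_add_le hd y
  have hcs := neg_le_of_abs_le (abs_real_inner_le_norm (gradient f x) (y - x))
  nlinarith [sq_nonneg (‖gradient f x‖ - μ * ‖y - x‖)]

theorem LipschitzOnWith.le_add_inner_gradient_add_sq {L : ℝ≥0} (hf : Differentiable ℝ f)
    (hL : LipschitzOnWith L (gradient f) (segment ℝ x (x + d))) :
    f (x + d) ≤ f x + ⟪gradient f x, d⟫ + L / 2 * ‖d‖ ^ 2 := by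
  set ψ : ℝ → ℝ := fun t => f (x + t • d) - t * ⟪gradient f x, d⟫ - L / 2 * ‖d‖ ^ 2 * t ^ 2
  have hψ (t : ℝ) :
      HasDerivAt ψ (⟪gradient f (x + t • d) - gradient f x, d⟫ - L * ‖d‖ ^ 2 * t) t := by
    have := (((hf _).hasGradientAt.hasDerivAt_add_smul (x := x) (d := d) (t := t)).sub
      ((hasDerivAt_id t).mul_const ⟪gradient f x, d⟫)).sub
      ((hasDerivAt_pow 2 t).const_mul (L / 2 * ‖d‖ ^ 2))
    refine this.congr_deriv ?_
    rw [inner_sub_left]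
    simp only [one_mul, Nat.cast_ofNat]
    ring
  obtain ⟨c, hc, hslope⟩ := exists_hasDerivAt_eq_slope ψ _ zero_lt_one
    (fun t _ => (hψ t).continuousAt.continuousWithinAt) (fun t _ => hψ t)
  have hmem : x + c • d ∈ segment ℝ x (x + d) := by
    simpa using add_smul_mem_segment (x := x) (d := d) ⟨hc.1.le, hc.2.le⟩ one_pos
  have hderiv := hL.inner_sub_le (left_mem_segment ℝ x (x + d)) hmem d
  rw [add_sub_cancel_left, norm_smul, Real.norm_of_nonneg hc.1.le] at hderiv
  have hψ_le : ψ 1 ≤ ψ 0 := by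
    rw [sub_zero, div_one] at hslope
    nlinarith
  simp only [ψ, one_smul, zero_smul, add_zero, one_mul, zero_mul, one_pow, mul_one, sub_zero,
    ne_eq, OfNat.ofNat_ne_zero, not_false_eq_true, zero_pow] at hψ_le
  linarith

variable {α : ℝ} {L : ℝ≥0}

theorem IsMinOn.neg_inner_gradient_le (hf : Differentiable ℝ f) (hα : 0 < α)
    (hmin : IsMinOn (fun a : ℝ => f (x + a • d)) (Ioi 0) α)
    (hL : LipschitzOnWith L (gradient f) (segment ℝ x (x + α • d))) :
    -⟪gradient f x, d⟫ ≤ L * α * ‖d‖ ^ 2 := by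
  have hcrit : ⟪gradient f (x + α • d), d⟫ = 0 :=
    (hmin.isLocalMin (Ioi_mem_nhds hα)).hasDerivAt_eq_zero
      (hf _).hasGradientAt.hasDerivAt_add_smul
  have := hL.inner_sub_le (left_mem_segment ℝ x _) (right_mem_segment ℝ x _) d
  rw [inner_sub_left, hcrit, add_sub_cancel_left, norm_smul, Real.norm_of_nonneg hα.le] at this
  linarith

theorem IsMinOn.le_sub_inner_gradient_sq_div (hf : Differentiable ℝ f) (hα : 0 < α)
    (hmin : IsMinOn (fun a : ℝ => f (x + a • d)) (Ioi 0) α)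
    (hL : LipschitzOnWith L (gradient f) (segment ℝ x (x + α • d)))
    (hdesc : ⟪gradient f x, d⟫ < 0) :
    f (x + α • d) ≤ f x - ⟪gradient f x, d⟫ ^ 2 / (2 * L * ‖d‖ ^ 2) := by
  set c := ⟪gradient f x, d⟫
  have hbound := hmin.neg_inner_gradient_le hf hα hL
  have hLd : 0 < (L : ℝ) * ‖d‖ ^ 2 := by nlinarith
  set t := -c / (L * ‖d‖ ^ 2)
  have ht : 0 < t := div_pos (neg_pos.2 hdesc) hLd
  have htα : t ≤ α := (div_le_iff₀ hLd).2 (by linarith)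
  have hseg : segment ℝ x (x + t • d) ⊆ segment ℝ x (x + α • d) :=
    (convex_segment _ _).segment_subset (left_mem_segment ℝ _ _)
      (add_smul_mem_segment ⟨ht.le, htα⟩ hα)
  calc f (x + α • d) ≤ f (x + t • d) := hmin ht
    _ ≤ f x + ⟪gradient f x, t • d⟫ + L / 2 * ‖t • d‖ ^ 2 :=
      (hL.mono hseg).le_add_inner_gradient_add_sq hf
    _ = f x - c ^ 2 / (2 * L * ‖d‖ ^ 2) := by
      rw [real_inner_smul_right, norm_smul, Real.norm_of_nonneg ht.le]
      simp only [t]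
      field_simp
      ring

end Gradient

theorem quasi_newton_one_step_contraction_general
    (n : ℕ) [NeZero n]
    (f : EuclideanSpace ℝ (Fin n) → ℝ) (μ L σ : ℝ)
    (hμ : 0 < μ) (hμL : μ ≤ L)
    (hsc : ConvexOn ℝ Set.univ (fun x => f x - μ / 2 * ‖x‖ ^ 2))
    (hf : Differentiable ℝ f)
    (vstar : EuclideanSpace ℝ (Fin n))
    (H : Matrix (Fin n) (Fin n) ℝ) (hH : H.PosDef)
    (hσ : (⨆ i, hH.1.eigenvalues i) / (⨅ i, hH.1.eigenvalues i) ≤ σ)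
    (v : EuclideanSpace ℝ (Fin n))
    (Δv : EuclideanSpace ℝ (Fin n))
    (hΔv : Δv = -(WithLp.equiv 2 (Fin n → ℝ)).symm
        (H⁻¹.mulVec (WithLp.equiv 2 (Fin n → ℝ) (gradient f v))))
    (αstar : ℝ) (hαs : 0 < αstar)
    (hα : IsMinOn (fun a : ℝ => f (v + a • Δv)) (Set.Ioi 0) αstar)
    (hLip : LipschitzOnWith (Real.toNNReal L) (gradient f)
      (segment ℝ v (v + αstar • Δv))) :
    f (v + αstar • Δv) - f vstar ≤ (1 - μ / (σ ^ 2 * L)) * (f v - f vstar) := by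
  have hL : 0 < L := hμ.trans_le hμL
  have hPL := (strongConvexOn_iff_convex.2 hsc).sub_le_norm_gradient_sq hμ.le (hf v) vstar
  set g := gradient f v with hg_def
  set y := toEuclideanLin H⁻¹ g
  have hΔy : Δv = -y := hΔv
  subst hΔy
  rcases eq_or_ne g 0 with hg | hg
  · have hk : 0 ≤ μ / (σ ^ 2 * L) := by positivity
    rw [hg, norm_zero] at hPL
    simp only [y, hg, map_zero, neg_zero, smul_zero, add_zero]
    nlinarith
  have hgy : 0 < ⟪g, y⟫ := hH.inv.inner_toEuclideanLin_pos_s17 hg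
  have hy : 0 < ‖y‖ := norm_pos_iff.2 fun h => by simp [h] at hgy
  have hangle : ‖g‖ * ‖y‖ ≤ σ * ⟪g, y⟫ :=
    (hH.norm_mul_norm_toEuclideanLin_inv_le g).trans (by gcongr)
  have hσ0 : 0 < σ :=
    pos_of_mul_pos_left ((by positivity : 0 < ‖g‖ * ‖y‖).trans_le hangle) hgy.le
  have hdecr := hα.le_sub_inner_gradient_sq_div hf hαs hLip
    (by rw [inner_neg_right]; exact neg_neg_of_pos hgy)
  rw [inner_neg_right, neg_sq, norm_neg, Real.coe_toNNReal L hL.le, ← hg_def] at hdecr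
  have hgain : μ / (σ ^ 2 * L) * (f v - f vstar) ≤ ⟪g, y⟫ ^ 2 / (2 * L * ‖y‖ ^ 2) :=
    calc μ / (σ ^ 2 * L) * (f v - f vstar)
        = 2 * μ * (f v - f vstar) / (2 * σ ^ 2 * L) := by field_simp
      _ ≤ ‖g‖ ^ 2 / (2 * σ ^ 2 * L) := by gcongr
      _ = (‖g‖ * ‖y‖) ^ 2 / (2 * σ ^ 2 * L * ‖y‖ ^ 2) := by field_simp
      _ ≤ (σ * ⟪g, y⟫) ^ 2 / (2 * σ ^ 2 * L * ‖y‖ ^ 2) := by gcongr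
      _ = ⟪g, y⟫ ^ 2 / (2 * L * ‖y‖ ^ 2) := by field_simp
  linarith

/-- One quasi-Newton step with exact line search on a `μ`-strongly convex
differentiable function, with SPD `H` of condition number at most `σ` and `∇f`
`L`-Lipschitz along the step, contracts the objective gap by `(1 - μ/(σ²L))`. -/
theorem quasi_newton_one_step_contraction
    (n : ℕ) [NeZero n]
    (f : EuclideanSpace ℝ (Fin n) → ℝ) (μ L σ : ℝ)
    (hμ : 0 < μ) (hμL : μ ≤ L)
    (hsc : ConvexOn ℝ Set.univ (fun x => f x - μ / 2 * ‖x‖ ^ 2))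
    (hf : Differentiable ℝ f)
    (vstar : EuclideanSpace ℝ (Fin n)) (hmin : ∀ w, f vstar ≤ f w)
    (H : Matrix (Fin n) (Fin n) ℝ) (hH : H.PosDef)
    (hσ : (⨆ i, hH.1.eigenvalues i) / (⨅ i, hH.1.eigenvalues i) ≤ σ)
    (v : EuclideanSpace ℝ (Fin n))
    (Δv : EuclideanSpace ℝ (Fin n))
    (hΔv : Δv = -(WithLp.equiv 2 (Fin n → ℝ)).symm
        (H⁻¹.mulVec (WithLp.equiv 2 (Fin n → ℝ) (gradient f v))))
    (αstar : ℝ) (hαs : 0 < αstar)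
    (hα : IsMinOn (fun a : ℝ => f (v + a • Δv)) (Set.Ioi 0) αstar)
    (hLip : LipschitzOnWith (Real.toNNReal L) (gradient f)
      (segment ℝ v (v + αstar • Δv))) :
    f (v + αstar • Δv) - f vstar ≤ (1 - μ / (σ ^ 2 * L)) * (f v - f vstar) :=
  quasi_newton_one_step_contraction_general n f μ L σ hμ hμL hsc hf vstar H hH hσ v Δv hΔv αstar hαs
    hα hLip
end
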